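/- arXiv:2309.16007 — 4 statements merged into one kernel-verified Lean document; each statement's English description precedes it below -/
import Mathlib

section
/- For a fixed real number k > -1 and coprime positive integers m, n, the sum of k-th powers of primes p ≡ n (mod m) with p ≤ x is asymptotic to the number of primes p ≡ n (mod m) with p ≤ x^{k+1}; that is, π_k(x; m, n) / π(x^{k+1}; m, n) → 1 as x → ∞. -/
open Real Filter Finset

/-- The finset of primes `p ≤ x` with `p ≡ n (mod m)`. -/
noncomputable def primesTo (x : ℝ) (m n : ℕ) : Finset ℕ :=
  (Finset.range (⌊x⌋₊ + 1)).filter fun p => p.Prime ∧ p % m = n % m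

/-- `π(x; m, n)`, the number of primes `p ≤ x` with `p ≡ n (mod m)`. -/
noncomputable def piCount (x : ℝ) (m n : ℕ) : ℝ := (primesTo x m n).card

/-- `π_k(x; m, n) = Σ_{p ≤ x, p ≡ n (mod m)} p^k`. -/
noncomputable def piPow (k x : ℝ) (m n : ℕ) : ℝ :=
  ∑ p ∈ primesTo x m n, (p : ℝ) ^ k

/-!
Partial summation gives `π_k(x) = x^k π(x) - ∫ k t^(k-1) π(t) dt`. Writing `π = li / φ(m) + E`,
an integration by parts and the substitution `s = t^(k+1)` turn the main part into
`li(x^(k+1)) / φ(m) + O(1)`. The hypothesis gives `E(x) = o(x / log x)`, so `x^k E(x)` is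
`o(x^(k+1) / log x)`, and so is `∫ k t^(k-1) E(t) dt`, by integrating the estimate against
`t^k / log t`, whose integral is `li(x^(k+1)) - li(c)`. Since `li(y) ≥ y / (2 log y)`, all of
this is `o(li(x^(k+1)))`, i.e. `π_k(x) ~ li(x^(k+1)) / φ(m)`; likewise `π(y) ~ li(y) / φ(m)`,
so also `π(x^(k+1)) ~ li(x^(k+1)) / φ(m)`.
-/

open MeasureTheory Asymptotics intervalIntegral

noncomputable def logIntegral (x : ℝ) : ℝ := ∫ t in (2 : ℝ)..x, 1 / log t

lemma continuousOn_one_div_log : ContinuousOn (fun t : ℝ => 1 / log t) (Set.Ioi 1) :=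
  continuousOn_const.div (continuousOn_log.mono fun _ ht => (zero_lt_one.trans ht).ne')
    fun _ ht => (log_pos ht).ne'

lemma continuousOn_rpow_div_log (r : ℝ) : ContinuousOn (fun t : ℝ => t ^ r / log t) (Set.Ioi 1) :=
  (continuousOn_id.rpow_const fun _ ht => Or.inl (zero_lt_one.trans ht).ne').div
    (continuousOn_log.mono fun _ ht => (zero_lt_one.trans ht).ne') fun _ ht => (log_pos ht).ne'

lemma intervalIntegrable_one_div_log {a b : ℝ} (ha : 1 < a) (hb : 1 < b) :
    IntervalIntegrable (fun t => 1 / log t) volume a b :=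
  (continuousOn_one_div_log.mono fun _ ht => lt_of_lt_of_le (lt_min ha hb) ht.1).intervalIntegrable

lemma hasDerivAt_logIntegral {x : ℝ} (hx : 1 < x) : HasDerivAt logIntegral (1 / log x) x :=
  integral_hasDerivAt_right (intervalIntegrable_one_div_log one_lt_two hx)
    (continuousOn_one_div_log.stronglyMeasurableAtFilter isOpen_Ioi x hx)
    (continuousOn_one_div_log.continuousAt (Ioi_mem_nhds hx))

lemma continuousOn_logIntegral : ContinuousOn logIntegral (Set.Ioi 1) :=
  fun _ hx => (hasDerivAt_logIntegral hx).continuousAt.continuousWithinAt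

lemma logIntegral_sub_logIntegral {a b : ℝ} (ha : 1 < a) (hb : 1 < b) :
    logIntegral b - logIntegral a = ∫ t in a..b, 1 / log t :=
  integral_interval_sub_left (intervalIntegrable_one_div_log one_lt_two hb)
    (intervalIntegrable_one_div_log one_lt_two ha)

lemma div_log_le_two_mul_logIntegral {y : ℝ} (hy : 4 ≤ y) : y / log y ≤ 2 * logIntegral y := by
  have hlog : 0 < log y := log_pos (by linarith)
  have hhead : 0 ≤ logIntegral (y / 2) :=
    integral_nonneg (by linarith) fun t ht => one_div_nonneg.2 (log_nonneg (by linarith [ht.1]))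
  have htail : (y - y / 2) * (1 / log y) ≤ ∫ t in (y / 2)..y, 1 / log t := by
    rw [← smul_eq_mul, ← intervalIntegral.integral_const]
    refine integral_mono_on (by linarith) intervalIntegrable_const
      (intervalIntegrable_one_div_log (by linarith) (by linarith)) fun t ht => ?_
    exact one_div_le_one_div_of_le (log_pos (by linarith [ht.1]))
      (log_le_log (by linarith [ht.1]) ht.2)
  rw [← logIntegral_sub_logIntegral (by linarith) (by linarith)] at htail
  have : y / log y = 2 * ((y - y / 2) * (1 / log y)) := by ring
  linarith

lemma tendsto_div_log_atTop : Tendsto (fun y : ℝ => y / log y) atTop atTop := by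
  have hpos : ∀ᶠ y : ℝ in atTop, log y / y ∈ Set.Ioi 0 := by
    filter_upwards [eventually_gt_atTop 1] with y hy using div_pos (log_pos hy) (by linarith)
  have h := (tendsto_nhdsWithin_iff.2
    ⟨isLittleO_log_id_atTop.tendsto_div_nhds_zero, hpos⟩).inv_tendsto_nhdsGT_zero
  exact h.congr fun y => inv_div _ _

lemma isBigO_div_log_logIntegral : (fun y : ℝ => y / log y) =O[atTop] logIntegral :=
  IsBigO.of_bound 2 <| by
    filter_upwards [eventually_ge_atTop 4] with y hy
    have h := div_log_le_two_mul_logIntegral hy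
    have : 0 ≤ y / log y := div_nonneg (by linarith) (log_nonneg (by linarith))
    rw [norm_of_nonneg this, norm_of_nonneg (by linarith)]
    exact h

lemma tendsto_logIntegral_atTop : Tendsto logIntegral atTop atTop :=
  tendsto_atTop_mono' atTop (by
    filter_upwards [eventually_ge_atTop 4] with y hy
    linarith [div_log_le_two_mul_logIntegral hy]) (tendsto_div_log_atTop.atTop_div_const two_pos)

lemma uIcc_subset_Ioi_one {a b : ℝ} (ha : 1 < a) (hb : 1 < b) : Set.uIcc a b ⊆ Set.Ioi 1 :=
  fun _ ht => lt_of_lt_of_le (lt_min ha hb) ht.1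

lemma integral_rpow_div_log {k a b : ℝ} (hk : -1 < k) (ha : 1 < a) (hb : 1 < b) :
    ∫ t in a..b, t ^ k / log t = logIntegral (b ^ (k + 1)) - logIntegral (a ^ (k + 1)) := by
  have hk1 : 0 < k + 1 := by linarith
  have hsub := uIcc_subset_Ioi_one ha hb
  rw [logIntegral_sub_logIntegral (one_lt_rpow ha hk1) (one_lt_rpow hb hk1)]
  have hderiv : ∀ t ∈ Set.uIcc a b, HasDerivAt (fun t : ℝ => t ^ (k + 1)) ((k + 1) * t ^ k) t :=
    fun t ht => by
      simpa using hasDerivAt_rpow_const (p := k + 1) (Or.inl (zero_lt_one.trans (hsub ht)).ne')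
  have hcont : ContinuousOn (fun t : ℝ => (k + 1) * t ^ k) (Set.uIcc a b) :=
    continuousOn_const.mul fun t ht =>
      (continuousAt_rpow_const t k (Or.inl (zero_lt_one.trans (hsub ht)).ne')).continuousWithinAt
  have himage :
      ContinuousOn (fun s : ℝ => 1 / log s) ((fun t : ℝ => t ^ (k + 1)) '' Set.uIcc a b) :=
    continuousOn_one_div_log.mono <| by
      rintro _ ⟨t, ht, rfl⟩
      exact one_lt_rpow (hsub ht) hk1
  rw [← integral_comp_mul_deriv' hderiv hcont himage]
  refine integral_congr fun t ht => ?_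
  have ht0 : 0 < t := zero_lt_one.trans (hsub ht)
  have hlog : log t ≠ 0 := (log_pos (hsub ht)).ne'
  simp only [Function.comp_apply, log_rpow ht0]
  field_simp

lemma integral_mul_rpow_sub_one_mul_logIntegral {k a b : ℝ} (hk : -1 < k) (ha : 1 < a)
    (hb : 1 < b) :
    ∫ t in a..b, k * t ^ (k - 1) * logIntegral t =
      b ^ k * logIntegral b - a ^ k * logIntegral a -
        (logIntegral (b ^ (k + 1)) - logIntegral (a ^ (k + 1))) := by
  have hsub := uIcc_subset_Ioi_one ha hb
  have hpos : ∀ t ∈ Set.uIcc a b, t ≠ 0 := fun t ht => (zero_lt_one.trans (hsub ht)).ne'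
  have hparts := integral_mul_deriv_eq_deriv_mul (u := logIntegral) (v := fun t => t ^ k)
    (fun t ht => hasDerivAt_logIntegral (hsub ht))
    (fun t ht => hasDerivAt_rpow_const (Or.inl (hpos t ht)))
    (intervalIntegrable_one_div_log ha hb)
    (continuousOn_const.mul fun t ht =>
      (continuousAt_rpow_const t (k - 1) (Or.inl (hpos t ht))).continuousWithinAt).intervalIntegrable
  rw [← integral_rpow_div_log hk ha hb]
  simp only [one_div_mul_eq_div] at hparts
  rw [mul_comm (b ^ k), mul_comm (a ^ k), ← hparts]
  exact integral_congr fun t _ => by ring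

theorem Asymptotics.IsLittleO.intervalIntegral {E : Type*} [NormedAddCommGroup E]
    [NormedSpace ℝ E] {f : ℝ → E} {g : ℝ → ℝ} {a : ℝ} (hfg : f =o[atTop] g)
    (hg : ∀ᶠ t in atTop, 0 ≤ g t) (hf_int : ∀ b ≥ a, IntervalIntegrable f volume a b)
    (hg_int : ∀ b ≥ a, IntervalIntegrable g volume a b)
    (hG : Tendsto (fun x => ∫ t in a..x, g t) atTop atTop) :
    (fun x => ∫ t in a..x, f t) =o[atTop] fun x => ∫ t in a..x, g t := by
  refine isLittleO_iff.2 fun ε hε => ?_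
  obtain ⟨T, hT⟩ := eventually_atTop.1
    ((hfg.def (half_pos hε)).and (hg.and (eventually_ge_atTop a)))
  have haT : a ≤ T := (hT T le_rfl).2.2
  have hbound : ∀ t ≥ T, ‖f t‖ ≤ ε / 2 * g t := fun t ht => by
    obtain ⟨hft, hgt, -⟩ := hT t ht
    rwa [norm_of_nonneg hgt] at hft
  set C := ‖∫ t in a..T, f t‖ + ε / 2 * |∫ t in a..T, g t| with hCdef
  have hC : (fun _ => C) =o[atTop] fun x => ∫ t in a..x, g t :=
    isLittleO_const_left.2 (Or.inr (tendsto_norm_atTop_atTop.comp hG))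
  filter_upwards [isLittleO_iff.1 hC (half_pos hε), eventually_ge_atTop T,
    hG.eventually_ge_atTop 0] with x hCx hTx hGx
  have hCnorm : ‖C‖ = C := norm_of_nonneg (by positivity)
  rw [norm_of_nonneg hGx] at hCx ⊢
  have htail : ‖∫ t in T..x, f t‖ ≤ ε / 2 * ((∫ t in a..x, g t) - ∫ t in a..T, g t) := by
    rw [integral_interval_sub_left (hg_int x (haT.trans hTx)) (hg_int T haT),
      ← intervalIntegral.integral_const_mul]
    exact norm_integral_le_of_norm_le hTx (ae_of_all _ fun t ht => hbound t ht.1.le)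
      (((hg_int T haT).symm.trans (hg_int x (haT.trans hTx))).const_mul _)
  calc ‖∫ t in a..x, f t‖
      = ‖(∫ t in a..T, f t) + ∫ t in T..x, f t‖ := by
        rw [integral_add_adjacent_intervals (hf_int T haT)
          ((hf_int T haT).symm.trans (hf_int x (haT.trans hTx)))]
    _ ≤ ‖∫ t in a..T, f t‖ + ‖∫ t in T..x, f t‖ := norm_add_le _ _
    _ ≤ C + ε / 2 * ∫ t in a..x, g t := by
        have := mul_le_mul_of_nonneg_left (neg_abs_le (∫ t in a..T, g t)) (half_pos hε).le
        linarith
    _ ≤ ε * ∫ t in a..x, g t := by linarith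

lemma isLittleO_mul_exp_neg_mul_sqrt_log {β : ℝ} (hβ : 0 < β) :
    (fun x : ℝ => x * exp (-β * √(log x))) =o[atTop] fun x => x / log x := by
  have hlog : (fun x : ℝ => log x) =o[atTop] fun x => exp (β * √(log x)) := by
    refine ((isLittleO_pow_exp_pos_mul_atTop 2 hβ).comp_tendsto
      (tendsto_sqrt_atTop.comp tendsto_log_atTop)).congr' ?_ EventuallyEq.rfl
    filter_upwards [eventually_ge_atTop 1] with x hx
    simp [sq_sqrt (log_nonneg hx)]
  have hsmall : (fun x : ℝ => log x * exp (-β * √(log x))) =o[atTop] fun _ => (1 : ℝ) :=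
    (isLittleO_one_iff ℝ).2 <| hlog.tendsto_div_nhds_zero.congr fun x => by
      rw [neg_mul, exp_neg, div_eq_mul_inv]
  refine ((isBigO_refl (fun x : ℝ => x / log x) atTop).mul_isLittleO hsmall).congr' ?_
    (by simp)
  filter_upwards [eventually_gt_atTop 1] with x hx
  field_simp [(log_pos hx).ne']

lemma isLittleO_rpow_mul_of_isLittleO_div_log {E : ℝ → ℝ} (hE : E =o[atTop] fun x => x / log x)
    (r : ℝ) : (fun x => x ^ r * E x) =o[atTop] fun x => x ^ (r + 1) / log x :=
  ((isBigO_refl (fun x : ℝ => x ^ r) atTop).mul_isLittleO hE).congr' EventuallyEq.rfl <| by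
    filter_upwards [eventually_gt_atTop 0] with x hx
    rw [rpow_add_one hx.ne', mul_div_assoc]

lemma isBigO_rpow_div_log_logIntegral_rpow {r : ℝ} (hr : 0 < r) :
    (fun x : ℝ => x ^ r / log x) =O[atTop] fun x => logIntegral (x ^ r) := by
  refine ((isBigO_const_mul_self r _ atTop).trans
    (isBigO_div_log_logIntegral.comp_tendsto (tendsto_rpow_atTop hr))).congr' ?_
    EventuallyEq.rfl
  filter_upwards [eventually_gt_atTop 0] with x hx
  simp only [Function.comp_apply, log_rpow hx]
  field_simp

noncomputable def apPrimeIndicator (m n p : ℕ) : ℝ := if p.Prime ∧ p % m = n % m then 1 else 0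

lemma piCount_eq_sum_apPrimeIndicator (x : ℝ) (m n : ℕ) :
    piCount x m n = ∑ p ∈ Icc 0 ⌊x⌋₊, apPrimeIndicator m n p := by
  rw [piCount, primesTo, natCast_card_filter, Nat.range_succ_eq_Icc_zero]
  rfl

lemma piPow_eq_sum_apPrimeIndicator (k x : ℝ) (m n : ℕ) :
    piPow k x m n = ∑ p ∈ Ioc 1 ⌊x⌋₊, (p : ℝ) ^ k * apPrimeIndicator m n p := by
  have hsub : Ioc 1 ⌊x⌋₊ ⊆ range (⌊x⌋₊ + 1) := fun p hp => by
    simp only [mem_Ioc, mem_range] at hp ⊢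
    omega
  rw [piPow, primesTo, sum_filter, ← sum_subset hsub]
  · exact sum_congr rfl fun p _ => by simp [apPrimeIndicator]
  · intro p hp hp'
    simp only [mem_Ioc, mem_range] at hp hp'
    exact if_neg fun h => absurd h.1.two_le (by omega)

lemma sum_Icc_zero_one_apPrimeIndicator (m n : ℕ) :
    ∑ p ∈ Icc 0 1, apPrimeIndicator m n p = 0 :=
  sum_eq_zero fun p hp => if_neg fun h => absurd h.1.two_le (by simp only [mem_Icc] at hp; omega)

lemma monotone_piCount (m n : ℕ) : Monotone fun x => piCount x m n := fun _ _ hxy =>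
  Nat.cast_le.2 <| card_le_card
    (filter_subset_filter _ (range_subset_range.2 (by gcongr)))

-- Starting at `3 / 2` keeps `⌊3 / 2⌋₊ = 1` below the first prime and `1 / log` away from `1`.
lemma piPow_eq_sub_integral (k : ℝ) (m n : ℕ) {x : ℝ} (hx : 3 / 2 ≤ x) :
    piPow k x m n =
      x ^ k * piCount x m n - ∫ t in (3 / 2 : ℝ)..x, k * t ^ (k - 1) * piCount t m n := by
  have hne : ∀ t ∈ Set.Icc (3 / 2 : ℝ) x, t ≠ 0 := fun t ht => by linarith [ht.1]
  have hderiv_int : IntegrableOn (deriv fun t : ℝ => t ^ k) (Set.Icc (3 / 2) x) := by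
    rw [deriv_rpow_const']
    exact (continuousOn_const.mul fun t ht =>
      (continuousAt_rpow_const t (k - 1) (Or.inl (hne t ht))).continuousWithinAt).integrableOn_Icc
  have habel := sum_mul_eq_sub_sub_integral_mul (apPrimeIndicator m n) (by norm_num) hx
    (fun t ht => differentiableAt_rpow_const_of_ne k (hne t ht)) hderiv_int
  rw [show ⌊(3 / 2 : ℝ)⌋₊ = 1 by norm_num [Nat.floor_eq_iff],
    sum_Icc_zero_one_apPrimeIndicator] at habel
  simp only [Real.deriv_rpow_const, ← piCount_eq_sum_apPrimeIndicator] at habel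
  rw [piPow_eq_sum_apPrimeIndicator, habel, integral_of_le hx]
  ring

noncomputable def piCountError (m n : ℕ) (x : ℝ) : ℝ :=
  piCount x m n - (1 / (Nat.totient m : ℝ)) * logIntegral x

lemma intervalIntegrable_mul_rpow_mul_piCountError (k : ℝ) (m n : ℕ) {a b : ℝ} (ha : 1 < a)
    (hb : 1 < b) :
    IntervalIntegrable (fun t => k * t ^ (k - 1) * piCountError m n t) volume a b := by
  have hsub := uIcc_subset_Ioi_one ha hb
  refine ((monotone_piCount m n).intervalIntegrable.sub
    ((continuousOn_logIntegral.mono hsub).intervalIntegrable.const_mul _)).continuousOn_mul ?_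
  exact continuousOn_const.mul (continuousOn_id.rpow_const fun t ht =>
    Or.inl (zero_lt_one.trans (hsub ht)).ne')

lemma piPow_sub_logIntegral_eq {k : ℝ} (hk : -1 < k) (m n : ℕ) {x : ℝ} (hx : 3 / 2 ≤ x) :
    piPow k x m n - (1 / (Nat.totient m : ℝ)) * logIntegral (x ^ (k + 1)) =
      (1 / (Nat.totient m : ℝ)) *
          ((3 / 2) ^ k * logIntegral (3 / 2) - logIntegral ((3 / 2) ^ (k + 1))) +
        x ^ k * piCountError m n x -
        ∫ t in (3 / 2 : ℝ)..x, k * t ^ (k - 1) * piCountError m n t := by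
  have hx1 : 1 < x := by linarith
  have hsub := uIcc_subset_Ioi_one (by norm_num : (1 : ℝ) < 3 / 2) hx1
  have hli : IntervalIntegrable (fun t => k * t ^ (k - 1) * logIntegral t) volume (3 / 2) x :=
    ((continuousOn_const.mul (continuousOn_id.rpow_const fun t ht =>
      Or.inl (zero_lt_one.trans (hsub ht)).ne')).mul
      (continuousOn_logIntegral.mono hsub)).intervalIntegrable
  have hsplit : ∫ t in (3 / 2 : ℝ)..x, k * t ^ (k - 1) * piCount t m n =
      (1 / (Nat.totient m : ℝ)) * (∫ t in (3 / 2 : ℝ)..x, k * t ^ (k - 1) * logIntegral t) +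
        ∫ t in (3 / 2 : ℝ)..x, k * t ^ (k - 1) * piCountError m n t := by
    rw [← intervalIntegral.integral_const_mul, ← integral_add (hli.const_mul _)
      (intervalIntegrable_mul_rpow_mul_piCountError k m n (by norm_num) hx1)]
    exact integral_congr fun t _ => by simp only [piCountError]; ring
  rw [piPow_eq_sub_integral k m n hx, hsplit,
    integral_mul_rpow_sub_one_mul_logIntegral hk (by norm_num) hx1, piCountError]
  ring

lemma piCount_isEquivalent_logIntegral {m : ℕ} (hm : 0 < m) (n : ℕ)
    (hE : piCountError m n =o[atTop] fun x => x / log x) :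
    (fun y => piCount y m n) ~[atTop] fun y => (1 / (Nat.totient m : ℝ)) * logIntegral y :=
  hE.trans_isBigO (isBigO_div_log_logIntegral.trans
    (isBigO_self_const_mul (by simpa using hm.ne') _ _))

lemma piPow_isEquivalent_logIntegral_rpow {k : ℝ} (hk : -1 < k) {m : ℕ} (hm : 0 < m) (n : ℕ)
    (hE : piCountError m n =o[atTop] fun x => x / log x) :
    (fun x => piPow k x m n) ~[atTop]
      fun x => (1 / (Nat.totient m : ℝ)) * logIntegral (x ^ (k + 1)) := by
  set L : ℝ → ℝ := fun x => logIntegral (x ^ (k + 1))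
  have hk1 : 0 < k + 1 := by linarith
  have hL : Tendsto L atTop atTop := tendsto_logIntegral_atTop.comp (tendsto_rpow_atTop hk1)
  have hconst (C : ℝ) : (fun _ => C) =o[atTop] L :=
    isLittleO_const_left.2 (Or.inr (tendsto_norm_atTop_atTop.comp hL))
  have hboundary : (fun x => x ^ k * piCountError m n x) =o[atTop] L :=
    (isLittleO_rpow_mul_of_isLittleO_div_log hE k).trans_isBigO
      (isBigO_rpow_div_log_logIntegral_rpow hk1)
  have hG : ∀ᶠ x in atTop, ∫ t in (3 / 2 : ℝ)..x, t ^ k / log t = L x - L (3 / 2) := by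
    filter_upwards [eventually_gt_atTop 1] with x hx
    exact integral_rpow_div_log hk (by norm_num) hx
  have hintegral : (fun x => ∫ t in (3 / 2 : ℝ)..x, k * t ^ (k - 1) * piCountError m n t)
      =o[atTop] L := by
    have hint := IsLittleO.intervalIntegral (a := 3 / 2)
      (g := fun t => t ^ k / log t)
      (by simpa only [mul_assoc, sub_add_cancel] using
        (isLittleO_rpow_mul_of_isLittleO_div_log hE (k - 1)).const_mul_left k)
      (by
        filter_upwards [eventually_gt_atTop 1] with t ht
        exact div_nonneg (rpow_nonneg (by linarith) k) (log_nonneg ht.le))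
      (fun b hb => intervalIntegrable_mul_rpow_mul_piCountError k m n (by norm_num) (by linarith))
      (fun b hb => ((continuousOn_rpow_div_log k).mono
        (uIcc_subset_Ioi_one (by norm_num) (by linarith))).intervalIntegrable)
      ((tendsto_atTop_add_const_right _ _ hL).congr' (hG.mono fun x hx => hx.symm))
    refine hint.trans_isBigO ?_
    exact ((isBigO_refl L atTop).sub (hconst _).isBigO).congr' (hG.mono fun x hx => hx.symm)
      EventuallyEq.rfl
  refine IsLittleO.isEquivalent (IsLittleO.trans_isBigO ?_
    (isBigO_self_const_mul (by simpa using hm.ne') L atTop))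
  refine (((hconst ((1 / (Nat.totient m : ℝ)) *
    ((3 / 2) ^ k * logIntegral (3 / 2) - logIntegral ((3 / 2) ^ (k + 1))))).add
      hboundary).sub hintegral).congr' ?_ EventuallyEq.rfl
  filter_upwards [eventually_ge_atTop (3 / 2)] with x hx
  exact (piPow_sub_logIntegral_eq hk m n hx).symm

theorem stmt_0_general (k : ℝ) (hk : k > -1) (m n : ℕ) (hm : 0 < m)
    (hPNT : ∃ α > (0:ℝ),
      (fun x => piCount x m n - (1 / (Nat.totient m : ℝ)) * ∫ t in (2:ℝ)..x, 1 / Real.log t)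
        =O[atTop] fun x => x * Real.exp (-(α / 2) * Real.sqrt (Real.log x))) :
    Tendsto (fun x : ℝ => piPow k x m n / piCount (x ^ (k + 1)) m n) atTop (nhds 1) := by
  obtain ⟨α, hα, hO⟩ := hPNT
  have hE : piCountError m n =o[atTop] fun x => x / log x :=
    hO.trans_isLittleO (isLittleO_mul_exp_neg_mul_sqrt_log (by positivity))
  have hcount := (piCount_isEquivalent_logIntegral hm n hE).comp_tendsto
    (tendsto_rpow_atTop (by linarith : (0 : ℝ) < k + 1))
  have hcount_ne : ∀ᶠ x in atTop, piCount (x ^ (k + 1)) m n ≠ 0 :=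
    (hcount.symm.tendsto_atTop ((tendsto_logIntegral_atTop.comp (tendsto_rpow_atTop
      (by linarith))).const_mul_atTop (by simpa using hm))).eventually_ne_atTop 0
  exact (isEquivalent_iff_tendsto_one hcount_ne).1
    ((piPow_isEquivalent_logIntegral_rpow hk hm n hE).trans hcount.symm)

theorem stmt_0 (k : ℝ) (hk : k > -1) (m n : ℕ) (hm : 0 < m) (hn : 0 < n)
    (hmn : Nat.Coprime m n)
    (hPNT : ∃ α > (0:ℝ),
      (fun x => piCount x m n - (1 / (Nat.totient m : ℝ)) * ∫ t in (2:ℝ)..x, 1 / Real.log t)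
        =O[atTop] fun x => x * Real.exp (-(α / 2) * Real.sqrt (Real.log x))) :
    Tendsto (fun x : ℝ => piPow k x m n / piCount (x ^ (k + 1)) m n) atTop (nhds 1) :=
  stmt_0_general k hk m n hm hPNT
end

section
/- For coprime positive integers m, n there exists a constant B such that for all x ≥ 2, Σ_{p ≤ x, p ≡ n (mod m)} 1/p = (log log x)/φ(m) + B + O(1/log x), where the sum is over primes p. -/
/-! Partial summation against `1 / log t`, with weights `a p = log p / p` on the primes of the
progression and partial sums `A(t) = c log t + R(t)`, where `c = 1 / φ(m)` and `|R| ≤ C`, gives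
`∑ 1/p = A(x) / log x + ∫₂ˣ A(t) / (t log² t) dt = c + c (log log x - log log 2) + R(x) / log x
+ ∫₂ˣ R(t) / (t log² t) dt`.
Since `∫ₓ^∞ dt / (t log² t) = 1 / log x`, the last integral converges as `x → ∞` and differs from
its limit by at most `C / log x`; that limit goes into `B`. -/

open Real Filter Finset

open MeasureTheory

lemma intervalIntegrable_inv_div_log {a b : ℝ} (ha : 1 < a) (hb : 1 < b) :
    IntervalIntegrable (fun t ↦ t⁻¹ / log t) volume a b :=
  ContinuousOn.intervalIntegrable (by fun_prop (disch := grind [log_pos, Set.uIcc]))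

section BoundedWeight

variable {R : ℝ → ℝ} {C b : ℝ}

lemma ae_norm_mul_inv_div_log_sq_le (hb : 0 ≤ b) (hR : ∀ t, b < t → |R t| ≤ C) :
    ∀ᵐ t ∂volume.restrict (Set.Ioi b), ‖R t * (t⁻¹ / log t ^ 2)‖ ≤ C * (t⁻¹ / log t ^ 2) := by
  refine (ae_restrict_iff' measurableSet_Ioi).mpr (.of_forall fun t ht ↦ ?_)
  have hg : 0 ≤ t⁻¹ / log t ^ 2 := by
    have : 0 < t := hb.trans_lt ht
    positivity
  rw [norm_mul, Real.norm_of_nonneg hg, Real.norm_eq_abs]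
  exact mul_le_mul_of_nonneg_right (hR t ht) hg

lemma integrableOn_Ioi_mul_inv_div_log_sq (hb : 1 < b) (hRm : Measurable R)
    (hR : ∀ t, b < t → |R t| ≤ C) :
    IntegrableOn (fun t ↦ R t * (t⁻¹ / log t ^ 2)) (Set.Ioi b) :=
  ((integrableOn_inv_div_log_sq_Ioi hb).const_mul C).mono'
    (by fun_prop) (ae_norm_mul_inv_div_log_sq_le (by linarith) hR)

lemma abs_integral_Ioi_mul_inv_div_log_sq_le (hb : 1 < b) (hR : ∀ t, b < t → |R t| ≤ C) :
    |∫ t in Set.Ioi b, R t * (t⁻¹ / log t ^ 2)| ≤ C / log b :=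
  calc _ ≤ ∫ t in Set.Ioi b, C * (t⁻¹ / log t ^ 2) :=
        norm_integral_le_of_norm_le ((integrableOn_inv_div_log_sq_Ioi hb).const_mul C)
          (ae_norm_mul_inv_div_log_sq_le (by linarith) hR)
    _ = C / log b := by rw [integral_const_mul, integral_inv_div_log_sq_Ioi hb, div_eq_mul_inv]

end BoundedWeight

section PartialSummation

variable (a : ℕ → ℝ)

theorem sum_div_log_eq_div_log_add_integral (ha₀ : a 0 = 0) (ha₁ : a 1 = 0) (x : ℝ) :
    ∑ k ∈ Icc 0 ⌊x⌋₊, a k / log k =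
      (∑ k ∈ Icc 0 ⌊x⌋₊, a k) / log x +
        ∫ t in Set.Ioc 2 x, (∑ k ∈ Icc 0 ⌊t⌋₊, a k) * (t⁻¹ / log t ^ 2) := by
  have hdiff : ∀ t ∈ Set.Icc 2 x, DifferentiableAt ℝ (fun u ↦ (log u)⁻¹) t := fun t ht ↦
    differentiableOn_inv_log.differentiableAt (Ioi_mem_nhds (by linarith [ht.1]))
  have hint : IntegrableOn (deriv fun u ↦ (log u)⁻¹) (Set.Icc 2 x) := by
    simp_rw [deriv_inv_log, neg_div]
    exact ((integrableOn_inv_div_log_sq_Ioi (by norm_num : (1 : ℝ) < 3 / 2)).neg).mono_set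
      fun t ht ↦ by simp only [Set.mem_Ioi]; linarith [ht.1]
  simp_rw [div_eq_inv_mul (a _), sum_mul_eq_sub_integral_mul₁ a ha₀ ha₁ x hdiff hint,
    deriv_inv_log, neg_div, neg_mul, integral_neg, sub_neg_eq_add, inv_mul_eq_div,
    mul_comm (_ / _ ^ 2)]

theorem exists_abs_sum_div_log_sub_mul_log_log_le (ha₀ : a 0 = 0) (ha₁ : a 1 = 0) {c C : ℝ}
    (h : ∀ t, 2 ≤ t → |∑ k ∈ Icc 0 ⌊t⌋₊, a k - c * log t| ≤ C) :
    ∃ B, ∀ x, 2 ≤ x →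
      |∑ k ∈ Icc 0 ⌊x⌋₊, a k / log k - (c * log (log x) + B)| ≤ 2 * C / log x := by
  set A : ℝ → ℝ := fun t ↦ ∑ k ∈ Icc 0 ⌊t⌋₊, a k
  set R : ℝ → ℝ := fun t ↦ A t - c * log t
  have hR : ∀ b, 2 ≤ b → ∀ t, b < t → |R t| ≤ C := fun b hb t ht ↦ h t (hb.trans ht.le)
  have hint : ∀ b, 2 ≤ b → IntegrableOn (fun t ↦ R t * (t⁻¹ / log t ^ 2)) (Set.Ioi b) :=
    fun b hb ↦ integrableOn_Ioi_mul_inv_div_log_sq (by linarith) (by fun_prop) (hR b hb)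
  refine ⟨c - c * log (log 2) + ∫ t in Set.Ioi 2, R t * (t⁻¹ / log t ^ 2), fun x hx ↦ ?_⟩
  have hlogx : 0 < log x := log_pos (by linarith)
  have hmain : ∫ t in Set.Ioc 2 x, A t * (t⁻¹ / log t ^ 2) =
      c * (log (log x) - log (log 2)) + ∫ t in Set.Ioc 2 x, R t * (t⁻¹ / log t ^ 2) := by
    rw [← integral_inv_div_log (by norm_num) (by linarith), intervalIntegral.integral_of_le hx,
      ← integral_const_mul, ← integral_add
        ((intervalIntegrable_inv_div_log (by norm_num) (by linarith)).1.const_mul c)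
        ((hint 2 le_rfl).mono_set Set.Ioc_subset_Ioi_self)]
    refine setIntegral_congr_fun measurableSet_Ioc fun t ht ↦ ?_
    have := (log_pos (by linarith [ht.1] : (1 : ℝ) < t)).ne'
    simp only [R]
    field_simp
    ring
  have htail : ∫ t in Set.Ioc 2 x, R t * (t⁻¹ / log t ^ 2) =
      (∫ t in Set.Ioi 2, R t * (t⁻¹ / log t ^ 2)) - ∫ t in Set.Ioi x, R t * (t⁻¹ / log t ^ 2) := by
    rw [← Set.Ioc_union_Ioi_eq_Ioi hx, setIntegral_union Set.Ioc_disjoint_Ioi_same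
      measurableSet_Ioi ((hint 2 le_rfl).mono_set Set.Ioc_subset_Ioi_self) (hint x hx)]
    ring
  have hkey : ∑ k ∈ Icc 0 ⌊x⌋₊, a k / log k -
      (c * log (log x) + (c - c * log (log 2) + ∫ t in Set.Ioi 2, R t * (t⁻¹ / log t ^ 2))) =
      R x / log x - ∫ t in Set.Ioi x, R t * (t⁻¹ / log t ^ 2) := by
    rw [sum_div_log_eq_div_log_add_integral a ha₀ ha₁, hmain, htail]
    simp only [R]
    field_simp
    ring
  rw [hkey]
  calc _ ≤ |R x / log x| + |∫ t in Set.Ioi x, R t * (t⁻¹ / log t ^ 2)| := abs_sub _ _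
    _ ≤ C / log x + C / log x := by
        refine add_le_add ?_ (abs_integral_Ioi_mul_inv_div_log_sq_le (by linarith) (hR x hx))
        rw [abs_div, abs_of_pos hlogx]
        exact div_le_div_of_nonneg_right (h x hx) hlogx.le
    _ = 2 * C / log x := by ring

end PartialSummation

lemma sum_primesTo_eq_sum_Icc (x : ℝ) (m n : ℕ) (f : ℕ → ℝ) :
    ∑ p ∈ primesTo x m n, f p =
      ∑ k ∈ Icc 0 ⌊x⌋₊, if k.Prime ∧ k % m = n % m then f k else 0 := by
  rw [primesTo, sum_filter, Nat.range_succ_eq_Icc_zero]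

theorem stmt_5_general (m n : ℕ)
    (hMertens : ∃ C : ℝ, ∀ x : ℝ, 2 ≤ x →
      |(∑ p ∈ primesTo x m n, Real.log p / p) - Real.log x / (Nat.totient m : ℝ)| ≤ C) :
    ∃ B C : ℝ, ∀ x : ℝ, 2 ≤ x →
      |(∑ p ∈ primesTo x m n, 1 / (p : ℝ)) -
        (Real.log (Real.log x) / (Nat.totient m : ℝ) + B)| ≤ C / Real.log x := by
  obtain ⟨C, hC⟩ := hMertens
  set a : ℕ → ℝ := fun k ↦ if k.Prime ∧ k % m = n % m then log k / k else 0
  have hrecip (x : ℝ) : ∑ p ∈ primesTo x m n, 1 / (p : ℝ) = ∑ k ∈ Icc 0 ⌊x⌋₊, a k / log k := by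
    rw [sum_primesTo_eq_sum_Icc]
    refine sum_congr rfl fun k _ ↦ ?_
    by_cases hk : k.Prime ∧ k % m = n % m
    · have : log k ≠ 0 := (log_pos (by exact_mod_cast hk.1.one_lt)).ne'
      simp only [a, if_pos hk]
      field_simp
    · simp only [a, if_neg hk, zero_div]
  have hlog (t : ℝ) : ∑ p ∈ primesTo t m n, log p / p = ∑ k ∈ Icc 0 ⌊t⌋₊, a k :=
    sum_primesTo_eq_sum_Icc t m n _
  obtain ⟨B, hB⟩ := exists_abs_sum_div_log_sub_mul_log_log_le a (by simp [a, Nat.not_prime_zero])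
    (by simp [a, Nat.not_prime_one]) (c := (Nat.totient m : ℝ)⁻¹) fun t ht ↦ by
      rw [← div_eq_inv_mul, ← hlog]
      exact hC t ht
  refine ⟨B, 2 * C, fun x hx ↦ ?_⟩
  rw [hrecip, div_eq_inv_mul (log (log x))]
  exact hB x hx

theorem stmt_5 (m n : ℕ) (hm : 0 < m) (hn : 0 < n) (hmn : Nat.Coprime m n)
    (hMertens : ∃ C : ℝ, ∀ x : ℝ, 2 ≤ x →
      |(∑ p ∈ primesTo x m n, Real.log p / p) - Real.log x / (Nat.totient m : ℝ)| ≤ C) :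
    ∃ B C : ℝ, ∀ x : ℝ, 2 ≤ x →
      |(∑ p ∈ primesTo x m n, 1 / (p : ℝ)) -
        (Real.log (Real.log x) / (Nat.totient m : ℝ) + B)| ≤ C / Real.log x :=
  stmt_5_general m n hMertens
end

section
/- Let k > −1 and let f be a differentiable function on [2, ∞) such that x^{k+1} exp(−f(x)) → ∞ and x f'(x) → 0 as x → ∞. Then ∫₂^x t^k exp(−f(t)) dt = O(x^{k+1} exp(−f(x))) as x → ∞. -/
/-!
With `g x = x ^ (k + 1) * exp (-f x)` one has `g' x = x ^ k * exp (-f x) * (k + 1 - x * f' x)`,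
and since `x * f' x → 0` the last factor is eventually at least `(k + 1) / 2 > 0`. So the
integrand is eventually dominated by `2 / (k + 1)` times `g'`, and integrating gives
`∫₂^x t ^ k * exp (-f t) dt ≤ const + 2 / (k + 1) * g x`; the constant is absorbed because
`g x → ∞`.
-/

open Real Filter Set MeasureTheory Asymptotics

lemma isBigO_of_nonneg_of_le_add_const {α : Type*} {l : Filter α} {F g : α → ℝ} (K : ℝ)
    (hF_nonneg : ∀ᶠ x in l, 0 ≤ F x) (hF_le : ∀ᶠ x in l, F x ≤ K + g x)
    (hg : Tendsto g l atTop) : F =O[l] g := by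
  refine IsBigO.of_bound 2 ?_
  filter_upwards [hF_nonneg, hF_le, hg.eventually_ge_atTop |K|] with x h0 hle hK
  rw [Real.norm_eq_abs, Real.norm_eq_abs, abs_of_nonneg h0,
    abs_of_nonneg ((abs_nonneg K).trans hK)]
  linarith [le_abs_self K]

lemma integral_isBigO_of_le_deriv {φ g g' : ℝ → ℝ} {a : ℝ} (hφ : ContinuousOn φ (Ici a))
    (hφ_nonneg : ∀ x, a ≤ x → 0 ≤ φ x) (hg : ∀ᶠ x in atTop, HasDerivAt g (g' x) x)
    (hφ_le : ∀ᶠ x in atTop, φ x ≤ g' x) (hg_top : Tendsto g atTop atTop) :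
    (fun x => ∫ t in a..x, φ t) =O[atTop] g := by
  obtain ⟨x₀, hx₀⟩ := eventually_atTop.1 ((hg.and hφ_le).and (eventually_ge_atTop a))
  have hax₀ : a ≤ x₀ := (hx₀ x₀ le_rfl).2
  have hint : ∀ b c, a ≤ b → b ≤ c → IntervalIntegrable φ volume b c := fun b c hb hbc =>
    (hφ.mono fun t ht => hb.trans ht.1).intervalIntegrable_of_Icc hbc
  have htail : ∀ x, x₀ ≤ x → ∫ t in x₀..x, φ t ≤ g x - g x₀ := fun x hx =>
    intervalIntegral.integral_le_sub_of_hasDeriv_right_of_le hx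
      (fun y hy => ((hx₀ y hy.1).1.1.continuousAt).continuousWithinAt)
      (fun y hy => (hx₀ y hy.1.le).1.1.hasDerivWithinAt)
      ((hφ.mono fun t ht => hax₀.trans ht.1).integrableOn_compact isCompact_Icc)
      (fun y hy => (hx₀ y hy.1.le).1.2)
  refine isBigO_of_nonneg_of_le_add_const ((∫ t in a..x₀, φ t) - g x₀) ?_ ?_ hg_top
  · filter_upwards [eventually_ge_atTop a] with x hx
    exact intervalIntegral.integral_nonneg hx fun t ht => hφ_nonneg t ht.1
  · filter_upwards [eventually_ge_atTop x₀] with x hx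
    rw [← intervalIntegral.integral_add_adjacent_intervals (hint a x₀ le_rfl hax₀)
      (hint x₀ x hax₀ hx)]
    linarith [htail x hx]

lemma hasDerivAt_rpow_mul_exp_neg {f : ℝ → ℝ} {d k x : ℝ} (hx : x ≠ 0) (hf : HasDerivAt f d x) :
    HasDerivAt (fun y => y ^ (k + 1) * exp (-f y)) (x ^ k * exp (-f x) * (k + 1 - x * d)) x := by
  have hpow : HasDerivAt (fun y : ℝ => y ^ (k + 1)) ((k + 1) * x ^ k) x := by
    simpa using Real.hasDerivAt_rpow_const (p := k + 1) (Or.inl hx)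
  refine (hpow.mul hf.neg.exp).congr_deriv ?_
  rw [Real.rpow_add_one hx, Pi.neg_apply]
  ring

theorem stmt_7 (k : ℝ) (hk : k > -1) (f f' : ℝ → ℝ)
    (hf : ∀ x : ℝ, 2 ≤ x → HasDerivAt f (f' x) x)
    (hgrow : Tendsto (fun x : ℝ => x ^ (k + 1) * Real.exp (-f x)) atTop atTop)
    (hderiv : Tendsto (fun x : ℝ => x * f' x) atTop (nhds 0)) :
    (fun x : ℝ => ∫ t in (2:ℝ)..x, t ^ k * Real.exp (-f t))
      =O[atTop] fun x => x ^ (k + 1) * Real.exp (-f x) := by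
  have hk1 : 0 < k + 1 := by linarith
  have hcont : ContinuousOn (fun t => t ^ k * exp (-f t)) (Ici 2) := fun x hx =>
    ((Real.continuousAt_rpow_const x k (Or.inl (by linarith [mem_Ici.1 hx]))).mul
      (hf x hx).continuousAt.neg.rexp).continuousWithinAt
  have hnonneg : ∀ x : ℝ, 2 ≤ x → 0 ≤ x ^ k * exp (-f x) := fun x hx =>
    mul_nonneg (Real.rpow_nonneg (by linarith) k) (exp_pos _).le
  have hsmall : ∀ᶠ x in atTop, x * f' x < (k + 1) / 2 :=
    hderiv.eventually (gt_mem_nhds (by linarith))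
  refine (integral_isBigO_of_le_deriv (g := fun x => 2 / (k + 1) * (x ^ (k + 1) * exp (-f x)))
    (g' := fun x => 2 / (k + 1) * (x ^ k * exp (-f x) * (k + 1 - x * f' x)))
    hcont hnonneg ?_ ?_ (hgrow.const_mul_atTop (by positivity))).trans
    (isBigO_const_mul_self _ _ _)
  · filter_upwards [eventually_ge_atTop 2] with x hx
    exact (hasDerivAt_rpow_mul_exp_neg (by linarith) (hf x hx)).const_mul _
  · filter_upwards [eventually_ge_atTop 2, hsmall] with x hx hxf
    have hfactor : 1 ≤ 2 / (k + 1) * (k + 1 - x * f' x) := by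
      rw [div_mul_eq_mul_div, le_div_iff₀ hk1]
      linarith
    nlinarith [mul_le_mul_of_nonneg_left hfactor (hnonneg x hx)]
end

section
/- For k > −1 and coprime positive integers m, n, as x → ∞ the difference ∫₁^x π_k(t; m, n)/t^{k+2} dt − ∫₁^x π(t^{k+1}; m, n)/t^{k+2} dt converges to −log(k+1)/((k+1)φ(m)). -/
open Real Filter Finset

namespace Stmt13Aux

open MeasureTheory intervalIntegral Set

noncomputable def Sfun (m n : ℕ) (x : ℝ) : ℝ := ∑ p ∈ primesTo x m n, 1 / (p : ℝ)

lemma Sfun_nonneg (m n : ℕ) (x : ℝ) : 0 ≤ Sfun m n x :=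
  Finset.sum_nonneg fun p _ => by positivity

lemma mem_primesTo {x : ℝ} (hx : 0 ≤ x) {m n p : ℕ} :
    p ∈ primesTo x m n ↔ (p : ℝ) ≤ x ∧ p.Prime ∧ p % m = n % m := by
  simp only [primesTo, Finset.mem_filter, Finset.mem_range, Nat.lt_succ_iff,
    Nat.le_floor_iff hx]

lemma primesTo_eq_filter {t x : ℝ} (ht : 0 ≤ t) (htx : t ≤ x) (m n : ℕ) :
    primesTo t m n = (primesTo x m n).filter (fun p : ℕ => (p : ℝ) ≤ t) := by
  ext p
  simp only [Finset.mem_filter, mem_primesTo ht, mem_primesTo (ht.trans htx)]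
  constructor
  · rintro ⟨h1, h2⟩; exact ⟨⟨h1.trans htx, h2⟩, h1⟩
  · rintro ⟨⟨_, h2⟩, h1⟩; exact ⟨h1, h2⟩

lemma primesTo_mono {t x : ℝ} (h : t ≤ x) (m n : ℕ) :
    primesTo t m n ⊆ primesTo x m n :=
  Finset.filter_subset_filter _ (Finset.range_subset_range.2
    (Nat.succ_le_succ (Nat.floor_mono h)))

lemma bounds_of_mem {x : ℝ} (hx : 0 ≤ x) {m n p : ℕ} (hp : p ∈ primesTo x m n) :
    1 ≤ (p : ℝ) ∧ (p : ℝ) ≤ x := by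
  rw [mem_primesTo hx] at hp
  exact ⟨by exact_mod_cast hp.2.1.one_lt.le, hp.1⟩

lemma keyInt {k : ℝ} (hk2 : (0:ℝ) ≤ k + 2) (c q : ℝ) {a b : ℝ} (ha : 1 ≤ a) (hab : a ≤ b) :
    IntervalIntegrable (fun t : ℝ => if q ≤ t then c / t ^ (k + 2) else 0) volume a b := by
  rw [intervalIntegrable_iff_integrableOn_Ioc_of_le hab]
  have hg : IntegrableOn (fun t : ℝ => c / t ^ (k + 2)) (Icc a b) := by
    apply ContinuousOn.integrableOn_Icc
    apply ContinuousOn.div continuousOn_const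
    · exact ContinuousOn.rpow_const continuousOn_id
        (fun t ht => Or.inr hk2)
    · intro t ht
      have ht0 : (0:ℝ) < t := lt_of_lt_of_le zero_lt_one (ha.trans ht.1)
      exact ne_of_gt (Real.rpow_pos_of_pos ht0 _)
  have heq : (fun t : ℝ => if q ≤ t then c / t ^ (k + 2) else 0)
      = (Set.Ici q).indicator (fun t => c / t ^ (k + 2)) := by
    ext t; simp [Set.indicator_apply, Set.mem_Ici]
  rw [heq]
  rw [MeasureTheory.IntegrableOn, MeasureTheory.integrable_indicator_iff measurableSet_Ici,
    MeasureTheory.IntegrableOn, Measure.restrict_restrict measurableSet_Ici]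
  exact hg.mono_set (fun t ht => ⟨ht.2.1.le, ht.2.2⟩)

lemma keyVal {k : ℝ} (hk : -1 < k) {c q x : ℝ} (hq : 1 ≤ q) (hqx : q ≤ x) :
    (∫ t in (1:ℝ)..x, (if q ≤ t then c / t ^ (k + 2) else 0))
      = c * (q ^ (-(k + 1)) - x ^ (-(k + 1))) / (k + 1) := by
  have hk2 : (0:ℝ) ≤ k + 2 := by linarith
  have hk1 : (0:ℝ) < k + 1 := by linarith
  have hq0 : (0:ℝ) < q := lt_of_lt_of_le zero_lt_one hq
  rw [← intervalIntegral.integral_add_adjacent_intervals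
      (keyInt hk2 c q le_rfl hq) (keyInt hk2 c q hq hqx)]
  have h1 : (∫ t in (1:ℝ)..q, (if q ≤ t then c / t ^ (k + 2) else 0)) = 0 := by
    have hae : ∀ᵐ t : ℝ, t ∉ ({q} : Set ℝ) :=
      measure_eq_zero_iff_ae_notMem.mp (measure_singleton q)
    have : (∫ t in (1:ℝ)..q, (if q ≤ t then c / t ^ (k + 2) else 0))
        = ∫ _ in (1:ℝ)..q, (0:ℝ) := by
      apply intervalIntegral.integral_congr_ae
      filter_upwards [hae] with t htq hmem
      rw [Set.uIoc_of_le hq] at hmem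
      rw [if_neg]
      intro hqt
      exact htq (le_antisymm hmem.2 hqt)
    rw [this, intervalIntegral.integral_zero]
  have h2 : (∫ t in q..x, (if q ≤ t then c / t ^ (k + 2) else 0))
      = ∫ t in q..x, c * t ^ (-(k + 2)) := by
    apply intervalIntegral.integral_congr
    intro t ht
    rw [Set.uIcc_of_le hqx] at ht
    have ht0 : (0:ℝ) ≤ t := le_trans hq0.le ht.1
    show (if q ≤ t then c / t ^ (k + 2) else 0) = c * t ^ (-(k + 2))
    rw [if_pos ht.1, Real.rpow_neg ht0, div_eq_mul_inv]
  have hne : -(k + 2) ≠ -1 := by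
    intro h
    have hkk : k = -1 := by linarith
    linarith
  have hmem : (0:ℝ) ∉ Set.uIcc q x := by
    rw [Set.uIcc_of_le hqx]; intro h; exact absurd h.1 (by linarith)
  rw [h1, zero_add, h2, intervalIntegral.integral_const_mul,
    integral_rpow (Or.inr ⟨hne, hmem⟩)]
  have he : -(k + 2) + 1 = -(k + 1) := by ring
  rw [he, div_neg]
  ring

lemma intA {k : ℝ} (hk : -1 < k) (m n : ℕ) {x : ℝ} (hx : 1 ≤ x) :
    (∫ t in (1:ℝ)..x, piPow k t m n / t ^ (k + 2))
      = (Sfun m n x - x ^ (-(k + 1)) * piPow k x m n) / (k + 1) := by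
  have hx0 : (0:ℝ) ≤ x := by linarith
  have hk2 : (0:ℝ) ≤ k + 2 := by linarith
  have hcongr : Set.EqOn (fun t => piPow k t m n / t ^ (k + 2))
      (fun t => ∑ p ∈ primesTo x m n,
        (if (p:ℝ) ≤ t then (p:ℝ) ^ k / t ^ (k + 2) else 0)) (Set.uIcc 1 x) := by
    intro t ht
    rw [Set.uIcc_of_le hx] at ht
    beta_reduce
    rw [piPow, primesTo_eq_filter (by linarith [ht.1]) ht.2, Finset.sum_filter,
      Finset.sum_div]
    refine Finset.sum_congr rfl fun p hp => ?_
    split_ifs with h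
    · rfl
    · exact zero_div _
  have hsum : (∫ t in (1:ℝ)..x, ∑ p ∈ primesTo x m n,
      (if (p:ℝ) ≤ t then (p:ℝ) ^ k / t ^ (k + 2) else 0))
      = ∑ p ∈ primesTo x m n,
        ∫ t in (1:ℝ)..x, (if (p:ℝ) ≤ t then (p:ℝ) ^ k / t ^ (k + 2) else 0) :=
    intervalIntegral.integral_finset_sum
      (fun p _ => keyInt hk2 ((p:ℝ) ^ k) (p:ℝ) le_rfl hx)
  rw [intervalIntegral.integral_congr hcongr, hsum]
  have hval : ∀ p ∈ primesTo x m n,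
      (∫ t in (1:ℝ)..x, (if (p:ℝ) ≤ t then (p:ℝ) ^ k / t ^ (k + 2) else 0))
        = ((p:ℝ) ^ k * ((p:ℝ) ^ (-(k + 1)) - x ^ (-(k + 1)))) / (k + 1) := by
    intro p hp
    obtain ⟨h1, h2⟩ := bounds_of_mem hx0 hp
    exact keyVal hk h1 h2
  rw [Finset.sum_congr rfl hval, ← Finset.sum_div]
  congr 1
  rw [Sfun, piPow, Finset.mul_sum, ← Finset.sum_sub_distrib]
  refine Finset.sum_congr rfl fun p hp => ?_
  have hp0 : (0:ℝ) < p := lt_of_lt_of_le zero_lt_one (bounds_of_mem hx0 hp).1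
  rw [mul_sub, ← Real.rpow_add hp0]
  have : k + -(k + 1) = -1 := by ring
  rw [this, Real.rpow_neg_one]
  rw [one_div]
  ring

lemma intB {k : ℝ} (hk : -1 < k) (m n : ℕ) {x : ℝ} (hx : 1 ≤ x) :
    (∫ t in (1:ℝ)..x, piCount (t ^ (k + 1)) m n / t ^ (k + 2))
      = (Sfun m n (x ^ (k + 1)) - x ^ (-(k + 1)) * piCount (x ^ (k + 1)) m n) / (k + 1) := by
  have hx0 : (0:ℝ) ≤ x := by linarith
  have hk2 : (0:ℝ) ≤ k + 2 := by linarith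
  have hk1 : (0:ℝ) < k + 1 := by linarith
  have hxk0 : (0:ℝ) ≤ x ^ (k + 1) := Real.rpow_nonneg hx0 _
  have hcongr : Set.EqOn (fun t => piCount (t ^ (k + 1)) m n / t ^ (k + 2))
      (fun t => ∑ p ∈ primesTo (x ^ (k + 1)) m n,
        (if (p:ℝ) ^ (k+1)⁻¹ ≤ t then 1 / t ^ (k + 2) else 0)) (Set.uIcc 1 x) := by
    intro t ht
    rw [Set.uIcc_of_le hx] at ht
    have ht0 : (0:ℝ) ≤ t := by linarith [ht.1]
    beta_reduce
    rw [piCount, primesTo_eq_filter (Real.rpow_nonneg ht0 _)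
      (Real.rpow_le_rpow ht0 ht.2 hk1.le) m n, Finset.card_eq_sum_ones,
      Nat.cast_sum, Finset.sum_filter, Finset.sum_div]
    refine Finset.sum_congr rfl fun p hp => ?_
    have hp0 : (0:ℝ) ≤ p := Nat.cast_nonneg p
    have hiff : ((p:ℝ) ≤ t ^ (k+1)) ↔ ((p:ℝ) ^ (k+1)⁻¹ ≤ t) :=
      (Real.rpow_inv_le_iff_of_pos hp0 ht0 hk1).symm
    by_cases hA : (p:ℝ) ≤ t ^ (k+1)
    · rw [if_pos hA, if_pos (hiff.mp hA)]; norm_num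
    · rw [if_neg hA, if_neg (fun h => hA (hiff.mpr h))]; norm_num
  have hsum : (∫ t in (1:ℝ)..x, ∑ p ∈ primesTo (x ^ (k + 1)) m n,
      (if (p:ℝ) ^ (k+1)⁻¹ ≤ t then 1 / t ^ (k + 2) else 0))
      = ∑ p ∈ primesTo (x ^ (k + 1)) m n,
        ∫ t in (1:ℝ)..x, (if (p:ℝ) ^ (k+1)⁻¹ ≤ t then 1 / t ^ (k + 2) else 0) :=
    intervalIntegral.integral_finset_sum
      (fun p _ => keyInt hk2 1 ((p:ℝ) ^ (k+1)⁻¹) le_rfl hx)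
  rw [intervalIntegral.integral_congr hcongr, hsum]
  have hval : ∀ p ∈ primesTo (x ^ (k + 1)) m n,
      (∫ t in (1:ℝ)..x, (if (p:ℝ) ^ (k+1)⁻¹ ≤ t then 1 / t ^ (k + 2) else 0))
        = (1 / (p:ℝ) - x ^ (-(k + 1))) / (k + 1) := by
    intro p hp
    obtain ⟨h1, h2⟩ := bounds_of_mem hxk0 hp
    have hp0 : (0:ℝ) < p := lt_of_lt_of_le zero_lt_one h1
    have hq1 : 1 ≤ (p:ℝ) ^ (k+1)⁻¹ := by
      rw [Real.le_rpow_inv_iff_of_pos zero_le_one hp0.le hk1]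
      rwa [Real.one_rpow]
    have hqx : (p:ℝ) ^ (k+1)⁻¹ ≤ x := by
      rw [Real.rpow_inv_le_iff_of_pos hp0.le hx0 hk1]
      exact h2
    rw [keyVal hk hq1 hqx]
    congr 2
    rw [one_mul, ← Real.rpow_mul hp0.le]
    have : (k+1)⁻¹ * -(k + 1) = -1 := by field_simp
    rw [this, Real.rpow_neg_one, one_div]
  rw [Finset.sum_congr rfl hval, ← Finset.sum_div]
  congr 1
  rw [Sfun, Finset.sum_sub_distrib, Finset.sum_const, piCount, nsmul_eq_mul]
  ring

end Stmt13Aux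

open Stmt13Aux MeasureTheory Topology
theorem stmt_13 (k : ℝ) (hk : k > -1) (m n : ℕ) (hm : 0 < m) (hn : 0 < n)
    (hmn : Nat.Coprime m n)
    (hMertens : ∃ B : ℝ,
      (fun x : ℝ => (∑ p ∈ primesTo x m n, 1 / (p : ℝ)) -
          (Real.log (Real.log x) / (Nat.totient m : ℝ) + B))
        =O[atTop] fun x => 1 / Real.log x) :
    Tendsto (fun x : ℝ =>
        (∫ t in (1:ℝ)..x, piPow k t m n / t ^ (k + 2)) -
          ∫ t in (1:ℝ)..x, piCount (t ^ (k + 1)) m n / t ^ (k + 2))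
      atTop (nhds (-Real.log (k + 1) / ((k + 1) * (Nat.totient m : ℝ)))) := by
  obtain ⟨B, hB⟩ := hMertens
  set φ : ℝ := (Nat.totient m : ℝ) with hφdef
  have htp : 0 < m.totient := (Nat.totient_pos (n := m)).mpr hm
  have hφ0 : (0:ℝ) < φ := by rw [hφdef]; exact_mod_cast htp
  have hφ1 : (1:ℝ) ≤ φ := by rw [hφdef]; exact_mod_cast htp
  have hk1 : (0:ℝ) < k + 1 := by linarith
  -- Mertens as a limit
  have hS : Tendsto (fun x => Sfun m n x - (Real.log (Real.log x) / φ + B)) atTop (𝓝 0) := by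
    apply hB.trans_tendsto
    have : Tendsto (fun x : ℝ => (Real.log x)⁻¹) atTop (𝓝 0) :=
      tendsto_inv_atTop_zero.comp Real.tendsto_log_atTop
    simpa [one_div] using this
  -- Sfun difference limit
  have hSdiff : ∀ c : ℝ, 0 < c →
      Tendsto (fun x => Sfun m n (x ^ c) - Sfun m n x) atTop (𝓝 (Real.log c / φ)) := by
    intro c hc
    have hcomp : Tendsto (fun x => Sfun m n (x ^ c) -
        (Real.log (Real.log (x ^ c)) / φ + B)) atTop (𝓝 0) := hS.comp (tendsto_rpow_atTop hc)
    have h0 := (hcomp.sub hS).add_const (Real.log c / φ)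
    rw [show (0:ℝ) - 0 + Real.log c / φ = Real.log c / φ by ring] at h0
    apply h0.congr'
    filter_upwards [eventually_gt_atTop (1:ℝ)] with x hx1
    have hlx : 0 < Real.log x := Real.log_pos hx1
    rw [Real.log_rpow (by linarith), Real.log_mul (ne_of_gt hc) (ne_of_gt hlx)]
    ring
  -- key decay estimate
  have hT2 : ∀ k' : ℝ, -1 < k' →
      Tendsto (fun x => x ^ (-(k' + 1)) * piPow k' x m n) atTop (𝓝 0) := by
    intro k' hk'
    have hk1' : (0:ℝ) < k' + 1 := by linarith
    rw [NormedAddCommGroup.tendsto_nhds_zero]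
    intro ε hε
    set c : ℝ := Real.exp (-ε / 2) with hcdef
    have hc0 : 0 < c := Real.exp_pos _
    have hc1 : c < 1 := by
      rw [hcdef]
      apply Real.exp_lt_one_iff.mpr
      linarith
    have hlogc : Real.log c = -ε / 2 := Real.log_exp _
    have ha : (0:ℝ) < (1 - c) * (k' + 1) := by
      apply mul_pos (by linarith) hk1'
    set a : ℝ := (1 - c) * (k' + 1) with hadef
    -- upper bound function
    set g : ℝ → ℝ := fun x =>
      x ^ (-(k' + 1)) * x ^ (c * (k' + 1)) * Sfun m n (x ^ c) +
        (Sfun m n x - Sfun m n (x ^ c)) with hgdef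
    -- first term of g tends to 0
    have hgA : Tendsto (fun x => x ^ (-a) * Sfun m n (x ^ c)) atTop (𝓝 0) := by
      -- squeeze: 0 ≤ x^(-a) Sfun(x^c) ≤ 2 log x / x^a eventually
      have hupper : Tendsto (fun x : ℝ => 2 * (Real.log x / x ^ a)) atTop (𝓝 0) := by
        have := (isLittleO_log_rpow_atTop ha).tendsto_div_nhds_zero
        simpa using this.const_mul 2
      have hev : ∀ᶠ x : ℝ in atTop, Sfun m n (x ^ c) ≤ 2 * Real.log x := by
        have hSb : ∀ᶠ y : ℝ in atTop,
            Sfun m n y ≤ Real.log (Real.log y) / φ + B + 1 := by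
          filter_upwards [hS.eventually (eventually_le_nhds (by norm_num : (0:ℝ) < 1))]
            with y hy
          linarith [hy]
        have hcomp2 := (tendsto_rpow_atTop hc0).eventually hSb
        have hlog1 : Tendsto (fun x : ℝ => c * Real.log x) atTop atTop :=
          Real.tendsto_log_atTop.const_mul_atTop hc0
        filter_upwards [hcomp2, hlog1.eventually_ge_atTop 1,
          Real.tendsto_log_atTop.eventually_ge_atTop (|B| + 1),
          eventually_gt_atTop (1:ℝ)] with x h1 h2 h3 hx1
        have hx0 : (0:ℝ) < x := by linarith
        have habs : (0:ℝ) ≤ |B| := abs_nonneg B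
        have hlx : (0:ℝ) ≤ Real.log x := by linarith
        have hllog : Real.log (Real.log (x ^ c)) ≤ Real.log x := by
          rw [Real.log_rpow hx0]
          calc Real.log (c * Real.log x) ≤ c * Real.log x := Real.log_le_self (by linarith)
            _ ≤ 1 * Real.log x := by
                apply mul_le_mul_of_nonneg_right (le_of_lt hc1) (by linarith)
            _ = Real.log x := one_mul _
        have hdiv : Real.log (Real.log (x ^ c)) / φ ≤ Real.log x := by
          rcases le_or_gt (Real.log (Real.log (x ^ c))) 0 with h | h
          · have h0 : Real.log (Real.log (x ^ c)) / φ ≤ 0 :=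
              div_nonpos_iff.mpr (Or.inr ⟨h, hφ0.le⟩)
            have habs : (0:ℝ) ≤ |B| := abs_nonneg B
            have hlx0 : (0:ℝ) ≤ Real.log x := by linarith
            linarith
          · exact le_trans (div_le_self h.le hφ1) hllog
        calc Sfun m n (x ^ c) ≤ Real.log (Real.log (x ^ c)) / φ + B + 1 := h1
          _ ≤ Real.log x + (|B| + 1) := by
              have : B ≤ |B| := le_abs_self B
              linarith
          _ ≤ Real.log x + Real.log x := by linarith
          _ = 2 * Real.log x := by ring
      apply tendsto_of_tendsto_of_tendsto_of_le_of_le' tendsto_const_nhds hupper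
      · filter_upwards [eventually_ge_atTop (1:ℝ)] with x hx
        have hx0 : (0:ℝ) ≤ x := by linarith
        exact mul_nonneg (Real.rpow_nonneg hx0 _) (Sfun_nonneg m n _)
      · filter_upwards [hev, eventually_ge_atTop (1:ℝ)] with x hx hx1
        have hx0 : (0:ℝ) < x := by linarith
        have hxa : (0:ℝ) < x ^ a := Real.rpow_pos_of_pos hx0 _
        rw [Real.rpow_neg hx0.le]
        calc (x ^ a)⁻¹ * Sfun m n (x ^ c) ≤ (x ^ a)⁻¹ * (2 * Real.log x) := by
              apply mul_le_mul_of_nonneg_left hx (by positivity)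
          _ = 2 * (Real.log x / x ^ a) := by ring
    -- second term tends to -(log c)/φ
    have hgB : Tendsto (fun x => Sfun m n x - Sfun m n (x ^ c)) atTop (𝓝 (-(Real.log c) / φ)) := by
      have := (hSdiff c hc0).neg
      rw [show -(Real.log c / φ) = -(Real.log c) / φ by ring] at this
      apply this.congr
      intro x; ring
    have hg : Tendsto g atTop (𝓝 (0 + -(Real.log c) / φ)) := by
      apply Tendsto.add _ hgB
      apply hgA.congr'
      filter_upwards [eventually_gt_atTop (1:ℝ)] with x hx1
      have hx0 : (0:ℝ) < x := by linarith
      rw [← Real.rpow_add hx0]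
      congr 2
      rw [hadef]; ring
    have hlim_lt : 0 + -(Real.log c) / φ < ε := by
      rw [hlogc]
      have h1 : -(-ε / 2) / φ ≤ -(-ε / 2) / 1 :=
        div_le_div_of_nonneg_left (by linarith) zero_lt_one hφ1
      rw [div_one] at h1
      linarith
    have hglt := hg.eventually_lt_const hlim_lt
    -- the pointwise bound
    filter_upwards [hglt, eventually_ge_atTop (1:ℝ)] with x hgx hx1
    have hx0 : (0:ℝ) < x := by linarith
    have hxc0 : (0:ℝ) ≤ x ^ c := Real.rpow_nonneg hx0.le _
    have hxcx : x ^ c ≤ x := by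
      calc x ^ c ≤ x ^ (1:ℝ) := Real.rpow_le_rpow_of_exponent_le hx1 hc1.le
        _ = x := Real.rpow_one x
    have hsub := primesTo_mono hxcx m n
    have hbound1 : ∑ p ∈ primesTo (x ^ c) m n, (p:ℝ) ^ k'
        ≤ x ^ (c * (k' + 1)) * Sfun m n (x ^ c) := by
      rw [Sfun, Finset.mul_sum]
      apply Finset.sum_le_sum
      intro p hp
      obtain ⟨hp1, hp2⟩ := bounds_of_mem hxc0 hp
      have hp0 : (0:ℝ) < p := lt_of_lt_of_le zero_lt_one hp1
      have key : (p:ℝ) ^ k' = (p:ℝ) ^ (k' + 1) * (1 / (p:ℝ)) := by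
        rw [one_div, ← Real.rpow_neg_one (p:ℝ), ← Real.rpow_add hp0]
        congr 1; ring
      rw [key]
      apply mul_le_mul_of_nonneg_right _ (by positivity)
      calc (p:ℝ) ^ (k' + 1) ≤ (x ^ c) ^ (k' + 1) :=
            Real.rpow_le_rpow hp0.le hp2 hk1'.le
        _ = x ^ (c * (k' + 1)) := by rw [← Real.rpow_mul hx0.le]
    have hbound2 : ∑ p ∈ primesTo x m n \ primesTo (x ^ c) m n, (p:ℝ) ^ k'
        ≤ x ^ (k' + 1) * (Sfun m n x - Sfun m n (x ^ c)) := by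
      have hsd : Sfun m n x - Sfun m n (x ^ c)
          = ∑ p ∈ primesTo x m n \ primesTo (x ^ c) m n, 1 / (p:ℝ) :=
        (Finset.sum_sdiff_eq_sub hsub).symm
      rw [hsd, Finset.mul_sum]
      apply Finset.sum_le_sum
      intro p hp
      have hpmem := Finset.mem_sdiff.mp hp
      obtain ⟨hp1, hp2⟩ := bounds_of_mem hx0.le hpmem.1
      have hp0 : (0:ℝ) < p := lt_of_lt_of_le zero_lt_one hp1
      have key : (p:ℝ) ^ k' = (p:ℝ) ^ (k' + 1) * (1 / (p:ℝ)) := by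
        rw [one_div, ← Real.rpow_neg_one (p:ℝ), ← Real.rpow_add hp0]
        congr 1; ring
      rw [key]
      apply mul_le_mul_of_nonneg_right _ (by positivity)
      exact Real.rpow_le_rpow hp0.le hp2 hk1'.le
    have hsplit : piPow k' x m n
        = (∑ p ∈ primesTo x m n \ primesTo (x ^ c) m n, (p:ℝ) ^ k')
          + ∑ p ∈ primesTo (x ^ c) m n, (p:ℝ) ^ k' := by
      rw [piPow, Finset.sum_sdiff hsub]
    have hfnonneg : 0 ≤ x ^ (-(k' + 1)) * piPow k' x m n := by
      apply mul_nonneg (Real.rpow_nonneg hx0.le _)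
      exact Finset.sum_nonneg fun p _ => Real.rpow_nonneg (Nat.cast_nonneg p) _
    have hfg : x ^ (-(k' + 1)) * piPow k' x m n ≤ g x := by
      have hxneg : (0:ℝ) ≤ x ^ (-(k' + 1)) := Real.rpow_nonneg hx0.le _
      have hxx : x ^ (-(k' + 1)) * x ^ (k' + 1) = 1 := by
        rw [← Real.rpow_add hx0, show -(k' + 1) + (k' + 1) = 0 by ring, Real.rpow_zero]
      calc x ^ (-(k' + 1)) * piPow k' x m n
          ≤ x ^ (-(k' + 1)) * (x ^ (k' + 1) * (Sfun m n x - Sfun m n (x ^ c))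
              + x ^ (c * (k' + 1)) * Sfun m n (x ^ c)) := by
            apply mul_le_mul_of_nonneg_left _ hxneg
            rw [hsplit]
            exact add_le_add hbound2 hbound1
        _ = (x ^ (-(k' + 1)) * x ^ (k' + 1)) * (Sfun m n x - Sfun m n (x ^ c))
              + x ^ (-(k' + 1)) * x ^ (c * (k' + 1)) * Sfun m n (x ^ c) := by ring
        _ = g x := by rw [hxx, hgdef]; ring
    rw [Real.norm_eq_abs, abs_of_nonneg hfnonneg]
    exact lt_of_le_of_lt hfg hgx
  -- piCount decay
  have hT3 : Tendsto (fun x => x ^ (-(k + 1)) * piCount (x ^ (k + 1)) m n) atTop (𝓝 0) := by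
    have h0 := (hT2 0 (by norm_num)).comp (tendsto_rpow_atTop hk1)
    apply h0.congr'
    filter_upwards [eventually_gt_atTop (1:ℝ)] with x hx1
    have hx0 : (0:ℝ) < x := by linarith
    simp only [Function.comp]
    have h1 : (x ^ (k + 1)) ^ (-(0 + 1) : ℝ) = x ^ (-(k + 1)) := by
      rw [← Real.rpow_mul hx0.le]
      congr 1; ring
    have h2 : piPow 0 (x ^ (k + 1)) m n = piCount (x ^ (k + 1)) m n := by
      rw [piPow, piCount, Finset.card_eq_sum_ones, Nat.cast_sum]
      refine Finset.sum_congr rfl fun p hp => ?_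
      rw [Real.rpow_zero, Nat.cast_one]
    rw [h1, h2]
  -- Sfun difference for the main term
  have hmain : Tendsto (fun x => Sfun m n x - Sfun m n (x ^ (k + 1))) atTop
      (𝓝 (-(Real.log (k + 1)) / φ)) := by
    have := (hSdiff (k + 1) hk1).neg
    rw [show -(Real.log (k + 1) / φ) = -(Real.log (k + 1)) / φ by ring] at this
    apply this.congr
    intro x; ring
  -- assemble
  have hcombo := ((hmain.sub (hT2 k hk)).add hT3).div_const (k + 1)
  have hval : (-(Real.log (k + 1)) / φ - 0 + 0) / (k + 1)
      = -Real.log (k + 1) / ((k + 1) * φ) := by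
    rw [sub_zero, add_zero, div_div, mul_comm φ (k + 1)]
  rw [hval] at hcombo
  apply hcombo.congr'
  filter_upwards [eventually_ge_atTop (1:ℝ)] with x hx1
  rw [intA hk m n hx1, intB hk m n hx1]
  ring
end
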